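/- Let G = (V,E) be a finite simple graph, let R be a commutative ring, let v : E → R be edge weights, and let i, j ∈ V with i ≠ j. Then C_G(v) = Σ_{W ⊆ V, i ∈ W, j ∉ W} [ ∏_{e ∈ E(W,j)} (1 + v_e) - 1 ] · C_{G[W]}(v) · C_{G[V∖W]}(v), where E(W,j) denotes the set of edges of G with one endpoint in W and the other endpoint equal to j. -/

import Mathlib

open Finset SimpleGraph

/-- The number of connected components of the graph on the vertex set `W`
with edge set `A` (isolated vertices count as components). -/
noncomputable def kcomp {V : Type*} [Fintype V] [DecidableEq V]
    (W : Finset V) (A : Finset (Sym2 V)) : ℕ :=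
  Nat.card ((SimpleGraph.fromEdgeSet (A : Set (Sym2 V))).induce (W : Set V)).ConnectedComponent

/-- The edges of `G` with both endpoints in `W`, i.e. the edges of the
induced subgraph `G[W]`. -/
def edgesWithin {V : Type*} [Fintype V] [DecidableEq V]
    (G : SimpleGraph V) [DecidableRel G.Adj] (W : Finset V) : Finset (Sym2 V) :=
  G.edgeFinset.filter (fun e => ∀ x ∈ e, x ∈ W)

/-- The multivariate Tutte polynomial of the induced subgraph `G[W]`:
`Z_{G[W]}(q,v) = Σ_{A ⊆ E(G[W])} q^{k(A)} ∏_{e ∈ A} v_e`. -/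
noncomputable def Zmv {V : Type*} [Fintype V] [DecidableEq V] {R : Type*} [CommRing R]
    (G : SimpleGraph V) [DecidableRel G.Adj] (W : Finset V) (q : R) (v : Sym2 V → R) : R :=
  ∑ A ∈ (edgesWithin G W).powerset, q ^ kcomp W A * ∏ e ∈ A, v e

/-- `Ẑ_{G[W]}(q,v) = Σ_{A ⊆ E(G[W])} q^{k(A)-1} ∏_{e ∈ A} v_e`. -/
noncomputable def ZhatMv {V : Type*} [Fintype V] [DecidableEq V] {R : Type*} [CommRing R]
    (G : SimpleGraph V) [DecidableRel G.Adj] (W : Finset V) (q : R) (v : Sym2 V → R) : R :=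
  ∑ A ∈ (edgesWithin G W).powerset, q ^ (kcomp W A - 1) * ∏ e ∈ A, v e

/-- The generating polynomial of connected spanning subgraphs of `G[W]`:
`C_{G[W]}(v) = Σ_{A ⊆ E(G[W]) : k(A)=1} ∏_{e ∈ A} v_e`. -/
noncomputable def Cmv {V : Type*} [Fintype V] [DecidableEq V] {R : Type*} [CommRing R]
    (G : SimpleGraph V) [DecidableRel G.Adj] (W : Finset V) (v : Sym2 V → R) : R :=
  ∑ A ∈ (edgesWithin G W).powerset.filter (fun A => kcomp W A = 1), ∏ e ∈ A, v e

/-- The edges of `G` with one endpoint in `W` and the other endpoint equal to `j`. -/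
def edgesTo {V : Type*} [Fintype V] [DecidableEq V]
    (G : SimpleGraph V) [DecidableRel G.Adj] (W : Finset V) (j : V) : Finset (Sym2 V) :=
  G.edgeFinset.filter (fun e => ∃ x ∈ W, e = s(x, j))

/-!
Given a connected spanning edge set `A`, let `W` be the vertex set of the component of `i` once
the edges at `j` are removed. Every edge of `A` leaving `W` ends at `j`, so `A` splits uniquely into
a nonempty set of edges joining `W` to `j`, a connected spanning edge set of `G[W]`, and one of
`G[V ∖ W]`: a vertex outside `W` reaches `j` without entering `W`. Conversely every such triple
glues to a connected spanning edge set with the same `W`, and summing over the nonempty sets of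
edges joining `W` to `j` produces the factor `∏ (1 + v_e) - 1`.
-/

namespace Finset

variable {α : Type*} [DecidableEq α] {P Q S B C D : Finset α}

theorem union_union_inter_eq_of_disjoint (hPQ : Disjoint P Q) (hPS : Disjoint P S)
    (hQS : Disjoint Q S) (hB : B ⊆ P) (hC : C ⊆ Q) (hD : D ⊆ S) :
    (B ∪ C ∪ D) ∩ P = B ∧ (B ∪ C ∪ D) ∩ Q = C ∧ (B ∪ C ∪ D) ∩ S = D := by
  rw [Finset.disjoint_left] at hPQ hPS hQS
  rw [subset_iff] at hB hC hD
  refine ⟨?_, ?_, ?_⟩ <;> ext x <;> simp only [mem_inter, mem_union] <;> grind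

theorem sum_mul_sum_mul_sum {ι κ μ R : Type*} [CommRing R] (s : Finset ι) (t : Finset κ)
    (u : Finset μ) (f : ι → R) (g : κ → R) (h : μ → R) :
    (∑ a ∈ s, f a) * (∑ b ∈ t, g b) * ∑ c ∈ u, h c =
      ∑ p ∈ (s ×ˢ t) ×ˢ u, f p.1.1 * g p.1.2 * h p.2 := by
  rw [sum_mul_sum, ← sum_product', sum_mul_sum, ← sum_product']

theorem prod_one_add_sub_one {ι R : Type*} [CommRing R] [DecidableEq ι] (s : Finset ι)
    (f : ι → R) : ∏ i ∈ s, (1 + f i) - 1 = ∑ t ∈ s.powerset.erase ∅, ∏ i ∈ t, f i := by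
  rw [prod_one_add, ← sum_erase_add _ _ (empty_mem_powerset s), prod_empty, add_sub_cancel_right]

end Finset

namespace SimpleGraph

variable {V : Type*}

theorem nat_card_connectedComponent_eq_one_iff {G : SimpleGraph V} :
    Nat.card G.ConnectedComponent = 1 ↔ G.Connected := by
  rw [Nat.card_eq_one_iff_unique, connected_iff]
  refine and_congr ⟨fun _ u v => ConnectedComponent.exact (Subsingleton.elim _ _),
    Preconnected.subsingleton_connectedComponent⟩
    ⟨fun ⟨c⟩ => ?_, fun ⟨v⟩ => ⟨G.connectedComponentMk v⟩⟩
  obtain ⟨v, -⟩ := c.exists_rep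
  exact ⟨v⟩

theorem Walk.reachable_of_forall_adj {G H : SimpleGraph V} {S : Set V} {x t : V}
    (p : G.Walk x t) (hx : x ∈ S)
    (h : ∀ a b, G.Adj a b → a ∈ S → a ≠ t → b ∈ S ∧ H.Adj a b) : H.Reachable x t := by
  induction p with
  | nil => rfl
  | @cons a b c hab p ih =>
    by_cases hac : a = c
    · exact hac ▸ Reachable.refl a
    obtain ⟨hb, hab'⟩ := h a b hab hx hac
    exact hab'.reachable.trans (ih hb h)

theorem Walk.reachable_induce {G : SimpleGraph V} {S : Set V} {x y : V} (p : G.Walk x y)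
    (hS : ∀ a b, G.Adj a b → a ∈ S → b ∈ S) (hx : x ∈ S) (hy : y ∈ S) :
    (G.induce S).Reachable ⟨x, hx⟩ ⟨y, hy⟩ := by
  induction p with
  | nil => rfl
  | @cons a b c hab p ih =>
    have hb := hS a b hab hx
    exact (show (G.induce S).Adj ⟨a, hx⟩ ⟨b, hb⟩ from hab).reachable.trans (ih hb hy)

end SimpleGraph

section

variable {V : Type*}

abbrev edgeGraph (A : Finset (Sym2 V)) : SimpleGraph V := fromEdgeSet (A : Set (Sym2 V))

theorem edgeGraph_adj {A : Finset (Sym2 V)} {a b : V} :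
    (edgeGraph A).Adj a b ↔ s(a, b) ∈ A ∧ a ≠ b := by
  simp

def LeavesOnlyTo (A : Finset (Sym2 V)) (W : Finset V) (j : V) : Prop :=
  ∀ a b, s(a, b) ∈ A → a ∈ W → b ∉ W → b = j

variable [Fintype V] [DecidableEq V]

theorem kcomp_eq_one_iff {W : Finset V} {A : Finset (Sym2 V)} (hA : ∀ e ∈ A, ∀ x ∈ e, x ∈ W) :
    kcomp W A = 1 ↔ ∃ x ∈ W, ∀ y ∈ W, (edgeGraph A).Reachable x y := by
  have hclosed : ∀ a b, (edgeGraph A).Adj a b → a ∈ (W : Set V) → b ∈ (W : Set V) :=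
    fun a b hab _ => hA _ (edgeGraph_adj.mp hab).1 b (Sym2.mem_mk_right a b)
  rw [kcomp, nat_card_connectedComponent_eq_one_iff, connected_iff_exists_forall_reachable]
  constructor
  · rintro ⟨⟨x, hx⟩, h⟩
    exact ⟨x, hx, fun y hy => (h ⟨y, hy⟩).map (Embedding.induce _).toHom⟩
  · rintro ⟨x, hx, h⟩
    exact ⟨⟨x, hx⟩, fun ⟨y, hy⟩ => (h y hy).elim fun p => p.reachable_induce hclosed hx hy⟩

theorem kcomp_univ_eq_one_iff {A : Finset (Sym2 V)} :
    kcomp univ A = 1 ↔ (edgeGraph A).Connected := by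
  simp [kcomp_eq_one_iff, connected_iff_exists_forall_reachable]

open Classical in
noncomputable def componentAvoiding (i j : V) (A : Finset (Sym2 V)) : Finset V :=
  univ.filter fun x => (edgeGraph (A.filter (j ∉ ·))).Reachable i x

variable {A : Finset (Sym2 V)} {W : Finset V} {i j : V}

theorem mem_componentAvoiding {x : V} :
    x ∈ componentAvoiding i j A ↔ (edgeGraph (A.filter (j ∉ ·))).Reachable i x := by
  simp [componentAvoiding]

theorem self_mem_componentAvoiding : i ∈ componentAvoiding i j A :=
  mem_componentAvoiding.mpr (.refl i)

theorem not_mem_componentAvoiding (hij : i ≠ j) : j ∉ componentAvoiding i j A := by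
  intro h
  obtain ⟨p⟩ := (mem_componentAvoiding.mp h).symm
  cases p with
  | nil => exact hij rfl
  | cons hadj _ => exact (mem_filter.mp (edgeGraph_adj.mp hadj).1).2 (Sym2.mem_mk_left _ _)

end

section

variable {V : Type*} [Fintype V] [DecidableEq V] {G : SimpleGraph V} [DecidableRel G.Adj]
  {A : Finset (Sym2 V)} {W : Finset V} {i j : V}

theorem mem_edgesWithin {e : Sym2 V} :
    e ∈ edgesWithin G W ↔ e ∈ G.edgeFinset ∧ ∀ x ∈ e, x ∈ W :=
  mem_filter

theorem mk_mem_edgesWithin {a b : V} : s(a, b) ∈ edgesWithin G W ↔ G.Adj a b ∧ a ∈ W ∧ b ∈ W := by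
  simp [edgesWithin]

theorem mk_mem_edgesTo {a : V} (hjW : j ∉ W) : s(a, j) ∈ edgesTo G W j ↔ G.Adj a j ∧ a ∈ W := by
  simp only [edgesTo, mem_filter, mem_edgeFinset, mem_edgeSet, Sym2.eq_iff]
  grind

theorem edgesWithin_univ : edgesWithin G univ = G.edgeFinset := by
  simp [edgesWithin]

theorem disjoint_edgesTo_edgesWithin (hjW : j ∉ W) :
    Disjoint (edgesTo G W j) (edgesWithin G W) := by
  simp only [Finset.disjoint_left, edgesTo, mem_filter, mem_edgesWithin]
  rintro _ ⟨-, x, -, rfl⟩ ⟨-, h⟩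
  exact hjW (h j (Sym2.mem_mk_right x j))

theorem disjoint_edgesTo_edgesWithin_sdiff :
    Disjoint (edgesTo G W j) (edgesWithin G (univ \ W)) := by
  simp only [Finset.disjoint_left, edgesTo, mem_filter, mem_edgesWithin]
  rintro _ ⟨-, x, hx, rfl⟩ ⟨-, h⟩
  exact (mem_sdiff.mp (h x (Sym2.mem_mk_left x j))).2 hx

theorem disjoint_edgesWithin_edgesWithin_sdiff :
    Disjoint (edgesWithin G W) (edgesWithin G (univ \ W)) := by
  simp only [Finset.disjoint_left, mem_edgesWithin]
  rintro e ⟨-, h⟩ ⟨-, h'⟩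
  induction e using Sym2.ind with
  | h x y => exact (mem_sdiff.mp (h' x (Sym2.mem_mk_left x y))).2 (h x (Sym2.mem_mk_left x y))

theorem subset_union_iff_leavesOnlyTo (hA : A ⊆ G.edgeFinset) (hjW : j ∉ W) :
    A ⊆ edgesTo G W j ∪ edgesWithin G W ∪ edgesWithin G (univ \ W) ↔ LeavesOnlyTo A W j := by
  constructor
  · intro hsub a b hab ha hb
    rcases mem_union.mp (hsub hab) with h | h
    · rcases mem_union.mp h with h | h
      · obtain ⟨-, x, -, hx⟩ := mem_filter.mp h
        grind [Sym2.eq_iff]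
      · exact absurd (mk_mem_edgesWithin.mp h).2.2 hb
    · exact absurd ha (mem_sdiff.mp (mk_mem_edgesWithin.mp h).2.1).2
  · intro hleave e he
    induction e using Sym2.ind with | h a b => ?_
    have hadj : G.Adj a b := mem_edgeFinset.mp (hA he)
    simp only [mem_union, mk_mem_edgesWithin, mem_sdiff, mem_univ, true_and, hadj]
    by_cases ha : a ∈ W <;> by_cases hb : b ∈ W
    · exact .inl (.inr ⟨ha, hb⟩)
    · obtain rfl := hleave a b he ha hb
      exact .inl (.inl ((mk_mem_edgesTo hjW).mpr ⟨hadj, ha⟩))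
    · obtain rfl := hleave b a (Sym2.eq_swap ▸ he) hb ha
      exact .inl (.inl (Sym2.eq_swap ▸ (mk_mem_edgesTo hjW).mpr ⟨hadj.symm, hb⟩))
    · exact .inr ⟨ha, hb⟩

theorem leavesOnlyTo_of_componentAvoiding_eq (hW : componentAvoiding i j A = W) (hjW : j ∉ W) :
    LeavesOnlyTo A W j := by
  subst hW
  intro a b hab ha hb
  by_contra hbj
  have hja : j ≠ a := fun h => hjW (h ▸ ha)
  have hab' : (edgeGraph (A.filter (j ∉ ·))).Adj a b :=
    edgeGraph_adj.mpr ⟨mem_filter.mpr ⟨hab, by simp [Sym2.mem_iff, hja, Ne.symm hbj]⟩,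
      fun h => hb (h ▸ ha)⟩
  exact hb (mem_componentAvoiding.mpr ((mem_componentAvoiding.mp ha).trans hab'.reachable))

theorem kcomp_inter_edgesWithin_eq_one_iff :
    kcomp W (A ∩ edgesWithin G W) = 1 ↔
      ∃ x ∈ W, ∀ y ∈ W, (edgeGraph (A ∩ edgesWithin G W)).Reachable x y :=
  kcomp_eq_one_iff fun _ he => (mem_edgesWithin.mp (mem_inter.mp he).2).2

theorem inter_edgesTo_nonempty (hA : A ⊆ G.edgeFinset) (hconn : (edgeGraph A).Connected)
    (hleave : LeavesOnlyTo A W j) (hiW : i ∈ W) (hjW : j ∉ W) :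
    (A ∩ edgesTo G W j).Nonempty := by
  obtain ⟨p⟩ := hconn.preconnected i j
  obtain ⟨d, -, hd, hd'⟩ := p.exists_boundary_dart W hiW hjW
  obtain ⟨hdA, -⟩ := edgeGraph_adj.mp d.adj
  rw [hleave _ _ hdA hd hd'] at hdA
  exact ⟨_, mem_inter.mpr ⟨hdA, (mk_mem_edgesTo hjW).mpr ⟨mem_edgeFinset.mp (hA hdA), hd⟩⟩⟩

theorem kcomp_inter_edgesWithin_eq_one (hA : A ⊆ G.edgeFinset)
    (hW : componentAvoiding i j A = W) : kcomp W (A ∩ edgesWithin G W) = 1 := by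
  subst hW
  refine kcomp_inter_edgesWithin_eq_one_iff.mpr ⟨i, self_mem_componentAvoiding, fun y hy => ?_⟩
  obtain ⟨p⟩ := mem_componentAvoiding.mp hy
  refine p.reachable_of_forall_adj (S := componentAvoiding i j A) self_mem_componentAvoiding
    fun a b hab ha _ => ?_
  have hb := mem_componentAvoiding.mpr ((mem_componentAvoiding.mp ha).trans hab.reachable)
  obtain ⟨habA, hne⟩ := edgeGraph_adj.mp hab
  replace habA := (mem_filter.mp habA).1
  exact ⟨hb, edgeGraph_adj.mpr ⟨mem_inter.mpr
    ⟨habA, mk_mem_edgesWithin.mpr ⟨mem_edgeFinset.mp (hA habA), ha, hb⟩⟩, hne⟩⟩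

theorem kcomp_inter_edgesWithin_sdiff_eq_one (hA : A ⊆ G.edgeFinset)
    (hconn : (edgeGraph A).Connected) (hleave : LeavesOnlyTo A W j) (hjW : j ∉ W) :
    kcomp (univ \ W) (A ∩ edgesWithin G (univ \ W)) = 1 := by
  refine kcomp_inter_edgesWithin_eq_one_iff.mpr
    ⟨j, mem_sdiff.mpr ⟨mem_univ j, hjW⟩, fun y hy => ?_⟩
  obtain ⟨p⟩ := hconn.preconnected y j
  refine (p.reachable_of_forall_adj (S := {x | x ∉ W}) (mem_sdiff.mp hy).2
    fun a b hab ha haj => ?_).symm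
  obtain ⟨habA, hne⟩ := edgeGraph_adj.mp hab
  have hb : b ∉ W := fun hb => haj (hleave b a (Sym2.eq_swap ▸ habA) hb ha)
  refine ⟨hb, edgeGraph_adj.mpr ⟨mem_inter.mpr ⟨habA, mk_mem_edgesWithin.mpr ?_⟩, hne⟩⟩
  exact ⟨mem_edgeFinset.mp (hA habA), mem_sdiff.mpr ⟨mem_univ a, ha⟩,
    mem_sdiff.mpr ⟨mem_univ b, hb⟩⟩

theorem connected_of_kcomp_eq_one (hjW : j ∉ W) (hB : (A ∩ edgesTo G W j).Nonempty)
    (h1 : kcomp W (A ∩ edgesWithin G W) = 1)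
    (h2 : kcomp (univ \ W) (A ∩ edgesWithin G (univ \ W)) = 1) :
    (edgeGraph A).Connected := by
  obtain ⟨x, -, hx⟩ := kcomp_inter_edgesWithin_eq_one_iff.mp h1
  obtain ⟨z, -, hz⟩ := kcomp_inter_edgesWithin_eq_one_iff.mp h2
  have hmono {U : Finset V} : edgeGraph (A ∩ edgesWithin G U) ≤ edgeGraph A :=
    fromEdgeSet_mono (coe_subset.mpr inter_subset_left)
  obtain ⟨e, he⟩ := hB
  obtain ⟨heA, heP⟩ := mem_inter.mp he
  obtain ⟨-, w, hw, rfl⟩ := mem_filter.mp heP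
  have hwj : (edgeGraph A).Adj w j := edgeGraph_adj.mpr ⟨heA, fun h => hjW (h ▸ hw)⟩
  have hj : j ∈ univ \ W := mem_sdiff.mpr ⟨mem_univ j, hjW⟩
  refine (connected_iff_exists_forall_reachable _).mpr ⟨x, fun y => ?_⟩
  by_cases hy : y ∈ W
  · exact (hx y hy).mono hmono
  · have hxj : (edgeGraph A).Reachable x j := ((hx w hw).mono hmono).trans hwj.reachable
    exact hxj.trans (((hz j hj).symm.trans (hz y (mem_sdiff.mpr ⟨mem_univ y, hy⟩))).mono hmono)

theorem componentAvoiding_eq (hleave : LeavesOnlyTo A W j) (hiW : i ∈ W) (hjW : j ∉ W)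
    (h1 : kcomp W (A ∩ edgesWithin G W) = 1) : componentAvoiding i j A = W := by
  obtain ⟨x, -, hx⟩ := kcomp_inter_edgesWithin_eq_one_iff.mp h1
  have hsub : A ∩ edgesWithin G W ⊆ A.filter (j ∉ ·) := fun e he =>
    mem_filter.mpr ⟨(mem_inter.mp he).1,
      fun hj => hjW ((mem_edgesWithin.mp (mem_inter.mp he).2).2 j hj)⟩
  ext y
  rw [mem_componentAvoiding]
  constructor
  · rintro ⟨p⟩
    by_contra hy
    obtain ⟨d, -, hd, hd'⟩ := p.exists_boundary_dart W hiW hy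
    obtain ⟨hdA, hjd⟩ := mem_filter.mp (edgeGraph_adj.mp d.adj).1
    exact hjd (Sym2.mem_iff.mpr (.inr (hleave _ _ hdA hd hd').symm))
  · intro hy
    exact ((hx i hiW).symm.trans (hx y hy)).mono (fromEdgeSet_mono (coe_subset.mpr hsub))

theorem connected_and_componentAvoiding_eq_iff (hA : A ⊆ G.edgeFinset) (hiW : i ∈ W)
    (hjW : j ∉ W) :
    ((edgeGraph A).Connected ∧ componentAvoiding i j A = W) ↔
      A ⊆ edgesTo G W j ∪ edgesWithin G W ∪ edgesWithin G (univ \ W) ∧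
        (A ∩ edgesTo G W j).Nonempty ∧ kcomp W (A ∩ edgesWithin G W) = 1 ∧
        kcomp (univ \ W) (A ∩ edgesWithin G (univ \ W)) = 1 := by
  rw [subset_union_iff_leavesOnlyTo hA hjW]
  constructor
  · rintro ⟨hconn, hW⟩
    have hleave := leavesOnlyTo_of_componentAvoiding_eq hW hjW
    exact ⟨hleave, inter_edgesTo_nonempty hA hconn hleave hiW hjW,
      kcomp_inter_edgesWithin_eq_one hA hW,
      kcomp_inter_edgesWithin_sdiff_eq_one hA hconn hleave hjW⟩
  · rintro ⟨hleave, hB, h1, h2⟩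
    exact ⟨connected_of_kcomp_eq_one hjW hB h1 h2, componentAvoiding_eq hleave hiW hjW h1⟩

end

section

variable {V : Type*} [Fintype V] [DecidableEq V] {G : SimpleGraph V} [DecidableRel G.Adj]
  {W : Finset V} {i j : V}

variable (G) in
noncomputable def connectedEdgeSets (W : Finset V) : Finset (Finset (Sym2 V)) :=
  (edgesWithin G W).powerset.filter fun A => kcomp W A = 1

theorem mem_connectedEdgeSets {A : Finset (Sym2 V)} :
    A ∈ connectedEdgeSets G W ↔ A ⊆ edgesWithin G W ∧ kcomp W A = 1 := by
  simp [connectedEdgeSets]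

theorem mem_connectedEdgeSets_filter_componentAvoiding_iff {A : Finset (Sym2 V)} (hiW : i ∈ W)
    (hjW : j ∉ W) :
    A ∈ (connectedEdgeSets G univ).filter (componentAvoiding i j · = W) ↔
      A ⊆ edgesTo G W j ∪ edgesWithin G W ∪ edgesWithin G (univ \ W) ∧
        (A ∩ edgesTo G W j).Nonempty ∧ kcomp W (A ∩ edgesWithin G W) = 1 ∧
        kcomp (univ \ W) (A ∩ edgesWithin G (univ \ W)) = 1 := by
  rw [mem_filter, mem_connectedEdgeSets, edgesWithin_univ, kcomp_univ_eq_one_iff, and_assoc]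
  constructor
  · rintro ⟨hA, h⟩
    exact (connected_and_componentAvoiding_eq_iff hA hiW hjW).mp h
  · intro h
    have hA : A ⊆ G.edgeFinset :=
      h.1.trans (union_subset (union_subset (filter_subset _ _) (filter_subset _ _))
        (filter_subset _ _))
    exact ⟨hA, (connected_and_componentAvoiding_eq_iff hA hiW hjW).mpr h⟩

theorem sum_connectedEdgeSets_filter_componentAvoiding {R : Type*} [CommRing R]
    (v : Sym2 V → R) (hiW : i ∈ W) (hjW : j ∉ W) :
    ∑ A ∈ (connectedEdgeSets G univ).filter (componentAvoiding i j · = W), ∏ e ∈ A, v e =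
      ∑ p ∈ ((edgesTo G W j).powerset.erase ∅ ×ˢ connectedEdgeSets G W) ×ˢ
          connectedEdgeSets G (univ \ W),
        (∏ e ∈ p.1.1, v e) * (∏ e ∈ p.1.2, v e) * ∏ e ∈ p.2, v e := by
  have hPQ := disjoint_edgesTo_edgesWithin (G := G) hjW
  have hPS := disjoint_edgesTo_edgesWithin_sdiff (G := G) (W := W) (j := j)
  have hQS := disjoint_edgesWithin_edgesWithin_sdiff (G := G) (W := W)
  symm
  refine sum_nbij' (fun p => p.1.1 ∪ p.1.2 ∪ p.2)
    (fun A => ((A ∩ edgesTo G W j, A ∩ edgesWithin G W), A ∩ edgesWithin G (univ \ W)))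
    ?_ ?_ ?_ ?_ ?_
  · rintro ⟨⟨B, C⟩, D⟩ hp
    simp only [mem_product, mem_erase, mem_powerset, mem_connectedEdgeSets] at hp
    obtain ⟨⟨⟨hB0, hB⟩, hC, hC1⟩, hD, hD1⟩ := hp
    obtain ⟨hBP, hCQ, hDS⟩ := union_union_inter_eq_of_disjoint hPQ hPS hQS hB hC hD
    rw [mem_connectedEdgeSets_filter_componentAvoiding_iff hiW hjW, hBP, hCQ, hDS]
    exact ⟨union_subset_union (union_subset_union hB hC) hD, nonempty_iff_ne_empty.mpr hB0, hC1,
      hD1⟩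
  · intro A hA
    obtain ⟨-, hne, h1, h2⟩ := (mem_connectedEdgeSets_filter_componentAvoiding_iff hiW hjW).mp hA
    simp only [mem_product, mem_erase, mem_powerset, mem_connectedEdgeSets]
    exact ⟨⟨⟨hne.ne_empty, inter_subset_right⟩, inter_subset_right, h1⟩, inter_subset_right, h2⟩
  · rintro ⟨⟨B, C⟩, D⟩ hp
    simp only [mem_product, mem_erase, mem_powerset, mem_connectedEdgeSets] at hp
    obtain ⟨hBP, hCQ, hDS⟩ :=
      union_union_inter_eq_of_disjoint hPQ hPS hQS hp.1.1.2 hp.1.2.1 hp.2.1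
    rw [hBP, hCQ, hDS]
  · intro A hA
    obtain ⟨hsub, -⟩ := (mem_connectedEdgeSets_filter_componentAvoiding_iff hiW hjW).mp hA
    rw [← inter_union_distrib_left, ← inter_union_distrib_left, inter_eq_left.mpr hsub]
  · rintro ⟨⟨B, C⟩, D⟩ hp
    simp only [mem_product, mem_erase, mem_powerset, mem_connectedEdgeSets] at hp
    obtain ⟨⟨⟨-, hB⟩, hC, -⟩, hD, -⟩ := hp
    rw [prod_union (disjoint_union_left.mpr ⟨hPS.mono hB hD, hQS.mono hC hD⟩),
      prod_union (hPQ.mono hB hC)]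

end

theorem stmt16 {V : Type*} [Fintype V] [DecidableEq V] {R : Type*} [CommRing R]
    (G : SimpleGraph V) [DecidableRel G.Adj] (v : Sym2 V → R)
    (i j : V) (hij : i ≠ j) :
    Cmv G Finset.univ v
      = ∑ W ∈ Finset.univ.filter (fun W : Finset V => i ∈ W ∧ j ∉ W),
          ((∏ e ∈ edgesTo G W j, (1 + v e)) - 1) *
            Cmv G W v * Cmv G (Finset.univ \ W) v := by
  have hmaps : ∀ A ∈ connectedEdgeSets G univ,
      componentAvoiding i j A ∈ univ.filter fun W : Finset V => i ∈ W ∧ j ∉ W :=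
    fun _ _ => mem_filter.mpr
      ⟨mem_univ _, self_mem_componentAvoiding, not_mem_componentAvoiding hij⟩
  rw [Cmv, ← connectedEdgeSets, ← sum_fiberwise_of_maps_to hmaps]
  refine sum_congr rfl fun W hW => ?_
  obtain ⟨hiW, hjW⟩ := (mem_filter.mp hW).2
  rw [prod_one_add_sub_one, Cmv, Cmv, ← connectedEdgeSets, ← connectedEdgeSets,
    sum_mul_sum_mul_sum]
  exact sum_connectedEdgeSets_filter_componentAvoiding v hiW hjW
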